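/- arXiv:2403.01820 — 2 statements merged into one kernel-verified Lean document; each statement's English description precedes it below -/
import Mathlib

section
/- Suppose f is three times continuously differentiable and satisfies the scaled 1D LRTE on τ × D × [-1,1]. Then for every (t,x,μ) ∈ τ × D × [-1,1], the iterated expansion identity holds: f = ρ − (ε/σ(x)) μ ∂_x ρ − (ε²/σ(x)) ( ∂_t ρ − μ ∂_x((1/σ) μ ∂_x ρ) + α(x) f − G(x) ) + ε³ 𝒜(f) + ε⁴ ℬ(f), where 𝒜 and ℬ are the macroscopic auxiliary operators. -/
open MeasureTheory Real intervalIntegral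

/-- The partial derivative `∂_t f` of `f = f(t,x,μ)` in the time variable. -/
noncomputable def pt (f : ℝ → ℝ → ℝ → ℝ) (t x μ : ℝ) : ℝ := deriv (fun s => f s x μ) t

/-- The partial derivative `∂_x f` of `f = f(t,x,μ)` in the space variable. -/
noncomputable def px (f : ℝ → ℝ → ℝ → ℝ) (t x μ : ℝ) : ℝ := deriv (fun y => f t y μ) x

/-- The angular average `⟨f⟩(t,x) = (1/2) ∫_{-1}^{1} f(t,x,μ) dμ`. -/
noncomputable def avg (f : ℝ → ℝ → ℝ → ℝ) (t x : ℝ) : ℝ :=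
  (1 / 2) * ∫ μ in (-1 : ℝ)..1, f t x μ

/-- `f` satisfies the scaled 1D linear radiative transfer equation
`ε² ∂_t f + ε μ ∂_x f = σ(x)(⟨f⟩ − f) − ε² α(x) f + ε² G(x)`
on `(0,T) × (x_L,x_R) × [-1,1]`. -/
def SolvesLRTE (ε T xL xR : ℝ) (σ α G : ℝ → ℝ) (f : ℝ → ℝ → ℝ → ℝ) : Prop :=
  ∀ t ∈ Set.Ioo (0 : ℝ) T, ∀ x ∈ Set.Ioo xL xR, ∀ μ ∈ Set.Icc (-1 : ℝ) 1,
    ε ^ 2 * pt f t x μ + ε * μ * px f t x μ =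
      σ x * (avg f t x - f t x μ) - ε ^ 2 * α x * f t x μ + ε ^ 2 * G x

/-- The macroscopic auxiliary operator
`𝒜(f) = (1/σ) ∂_t((1/σ) μ ∂_x f) + (1/σ) μ ∂_x( (1/σ)( ∂_t f + α f − G − μ ∂_x((1/σ) μ ∂_x f) ) )`. -/
noncomputable def opA (σ α G : ℝ → ℝ) (f : ℝ → ℝ → ℝ → ℝ) : ℝ → ℝ → ℝ → ℝ :=
  fun t x μ =>
    (1 / σ x) * pt (fun t' x' μ' => (1 / σ x') * μ' * px f t' x' μ') t x μ
    + (1 / σ x) * μ *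
        px (fun t' x' μ' => (1 / σ x') *
          (pt f t' x' μ' + α x' * f t' x' μ' - G x'
            - μ' * px (fun s y ν => (1 / σ y) * ν * px f s y ν) t' x' μ')) t x μ

/-- The macroscopic auxiliary operator
`ℬ(f) = (1/σ²) ∂_t( ∂_t f + α f − G ) − (1/σ) μ ∂_x( (1/σ) μ ∂_x( (1/σ)( ∂_t f + α f − G ) ) )`. -/
noncomputable def opB (σ α G : ℝ → ℝ) (f : ℝ → ℝ → ℝ → ℝ) : ℝ → ℝ → ℝ → ℝ :=
  fun t x μ =>
    (1 / (σ x) ^ 2) * pt (fun t' x' μ' => pt f t' x' μ' + α x' * f t' x' μ' - G x') t x μ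
    - (1 / σ x) * μ *
        px (fun t' x' μ' => (1 / σ x') * μ' *
          px (fun s y ν => (1 / σ y) * (pt f s y ν + α y * f s y ν - G y)) t' x' μ') t x μ

/-!
Dividing the equation by `σ` gives `f = ρ - ε (μ/σ) ∂ₓf - ε² (1/σ)(∂ₜf + αf - G)` on the open
domain. Differentiating this identity in `x` and in `t` (with `ρ` differentiated under the integral
sign) and substituting the results into its own first- and second-order terms produces the
iterated expansion; what remains is a linear combination of these identities.
-/

open Function Filter Set

section PartialDerivatives

variable {f : ℝ → ℝ → ℝ → ℝ} {m n : WithTop ℕ∞}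

lemma hasDerivAt_pt (hf : Differentiable ℝ ↿f) (t x μ : ℝ) :
    HasDerivAt (fun s => f s x μ) (pt f t x μ) t :=
  ((hf.comp (differentiable_id.prodMk (differentiable_const (x, μ)))) t).hasDerivAt

lemma hasDerivAt_px (hf : Differentiable ℝ ↿f) (t x μ : ℝ) :
    HasDerivAt (fun y => f t y μ) (px f t x μ) x :=
  ((hf.comp ((differentiable_const t).prodMk
    (differentiable_id.prodMk (differentiable_const μ)))) x).hasDerivAt

lemma uncurry_pt (hf : Differentiable ℝ ↿f) : ↿(pt f) = fun p => fderiv ℝ ↿f p (1, 0, 0) := by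
  funext ⟨t, x, μ⟩
  exact (hasDerivAt_pt hf t x μ).unique <|
    (hf (t, x, μ)).hasFDerivAt.comp_hasDerivAt (l := ↿f) t
      ((hasDerivAt_id' t).prodMk ((hasDerivAt_const t x).prodMk (hasDerivAt_const t μ)))

lemma uncurry_px (hf : Differentiable ℝ ↿f) : ↿(px f) = fun p => fderiv ℝ ↿f p (0, 1, 0) := by
  funext ⟨t, x, μ⟩
  exact (hasDerivAt_px hf t x μ).unique <|
    (hf (t, x, μ)).hasFDerivAt.comp_hasDerivAt (l := ↿f) x
      ((hasDerivAt_const x t).prodMk ((hasDerivAt_id' x).prodMk (hasDerivAt_const x μ)))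

lemma contDiff_pt (hf : ContDiff ℝ n ↿f) (hmn : m + 1 ≤ n) : ContDiff ℝ m ↿(pt f) := by
  rw [uncurry_pt ((hf.of_le (le_add_self.trans hmn)).differentiable one_ne_zero)]
  exact (hf.fderiv_right hmn).clm_apply contDiff_const

lemma contDiff_px (hf : ContDiff ℝ n ↿f) (hmn : m + 1 ≤ n) : ContDiff ℝ m ↿(px f) := by
  rw [uncurry_px ((hf.of_le (le_add_self.trans hmn)).differentiable one_ne_zero)]
  exact (hf.fderiv_right hmn).clm_apply contDiff_const

lemma px_sub {g : ℝ → ℝ → ℝ → ℝ} (hf : Differentiable ℝ ↿f) (hg : Differentiable ℝ ↿g)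
    (t x μ : ℝ) : px (fun t x μ => f t x μ - g t x μ) t x μ = px f t x μ - px g t x μ :=
  ((hasDerivAt_px hf t x μ).sub (hasDerivAt_px hg t x μ)).deriv

end PartialDerivatives

section ParametricIntegral

open Metric MeasureTheory

theorem hasDerivAt_intervalIntegral_of_contDiff {E : Type*} [NormedAddCommGroup E]
    [NormedSpace ℝ E] {g : ℝ → ℝ → E} (hg : ContDiff ℝ 1 ↿g) (a b x : ℝ) :
    HasDerivAt (fun y => ∫ m in a..b, g y m) (∫ m in a..b, deriv (fun y => g y m) x) x := by
  set g' : ℝ → ℝ → E := fun y m => fderiv ℝ ↿g (y, m) (1, 0)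
  have hg'_cont : Continuous ↿g' := (hg.continuous_fderiv one_ne_zero).clm_apply continuous_const
  have hg'_deriv : ∀ y m, HasDerivAt (fun y => g y m) (g' y m) y := fun y m =>
    ((hg.differentiable one_ne_zero) (y, m)).hasFDerivAt.comp_hasDerivAt (l := ↿g) y
      ((hasDerivAt_id' y).prodMk (hasDerivAt_const y m))
  obtain ⟨C, hC⟩ := ((isCompact_closedBall x 1).prod (isCompact_uIcc (a := a) (b := b)))
    |>.exists_bound_of_continuousOn hg'_cont.continuousOn
  have hg_slice : ∀ y, Continuous (g y) := fun y =>
    hg.continuous.comp (continuous_const.prodMk continuous_id)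
  have key := intervalIntegral.hasDerivAt_integral_of_dominated_loc_of_deriv_le
    (μ := volume) (F' := g') (bound := fun _ => C) (ball_mem_nhds x one_pos)
    (Eventually.of_forall fun y => (hg_slice y).aestronglyMeasurable)
    ((hg_slice x).intervalIntegrable a b)
    (hg'_cont.comp (continuous_const.prodMk continuous_id)).aestronglyMeasurable
    (Eventually.of_forall fun m hm y hy =>
      hC (y, m) ⟨ball_subset_closedBall hy, uIoc_subset_uIcc hm⟩)
    intervalIntegrable_const
    (Eventually.of_forall fun m _ y _ => hg'_deriv y m)
  simpa only [fun m => (hg'_deriv x m).deriv] using key.2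

end ParametricIntegral

section AngularAverage

variable {f : ℝ → ℝ → ℝ → ℝ}

lemma hasDerivAt_avg_x (hf : ContDiff ℝ 1 ↿f) (t x : ℝ) :
    HasDerivAt (fun y => avg f t y) (avg (px f) t x) x :=
  (hasDerivAt_intervalIntegral_of_contDiff (g := fun y m => f t y m)
    (hf.comp (contDiff_const.prodMk contDiff_id)) (-1) 1 x).const_mul (1 / 2)

lemma hasDerivAt_avg_t (hf : ContDiff ℝ 1 ↿f) (t x : ℝ) :
    HasDerivAt (fun s => avg f s x) (avg (pt f) t x) t :=
  (hasDerivAt_intervalIntegral_of_contDiff (g := fun s m => f s x m)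
    (hf.comp (contDiff_fst.prodMk (contDiff_const.prodMk contDiff_snd))) (-1) 1 t).const_mul
      (1 / 2)

end AngularAverage

namespace LRTE

noncomputable def streaming (σ : ℝ → ℝ) (g : ℝ → ℝ → ℝ → ℝ) : ℝ → ℝ → ℝ → ℝ :=
  fun t x μ => 1 / σ x * μ * px g t x μ

noncomputable def balance (α G : ℝ → ℝ) (g : ℝ → ℝ → ℝ → ℝ) : ℝ → ℝ → ℝ → ℝ :=
  fun t x μ => pt g t x μ + α x * g t x μ - G x

noncomputable def relaxation (σ α G : ℝ → ℝ) (g : ℝ → ℝ → ℝ → ℝ) : ℝ → ℝ → ℝ → ℝ :=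
  fun t x μ => 1 / σ x * balance α G g t x μ

variable {σ α G : ℝ → ℝ} {g : ℝ → ℝ → ℝ → ℝ} {m n : WithTop ℕ∞}

lemma contDiff_streaming (hs : ContDiff ℝ m fun x => 1 / σ x) (hg : ContDiff ℝ n ↿g)
    (hmn : m + 1 ≤ n) : ContDiff ℝ m ↿(streaming σ g) :=
  ((hs.comp (contDiff_fst.comp contDiff_snd)).mul (contDiff_snd.comp contDiff_snd)).mul
    (contDiff_px hg hmn)

lemma contDiff_balance (hα : ContDiff ℝ m α) (hG : ContDiff ℝ m G) (hg : ContDiff ℝ n ↿g)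
    (hmn : m + 1 ≤ n) : ContDiff ℝ m ↿(balance α G g) :=
  ((contDiff_pt hg hmn).add ((hα.comp (contDiff_fst.comp contDiff_snd)).mul
    (hg.of_le (le_self_add.trans hmn)))).sub (hG.comp (contDiff_fst.comp contDiff_snd))

lemma contDiff_relaxation (hs : ContDiff ℝ m fun x => 1 / σ x) (hα : ContDiff ℝ m α)
    (hG : ContDiff ℝ m G) (hg : ContDiff ℝ n ↿g) (hmn : m + 1 ≤ n) :
    ContDiff ℝ m ↿(relaxation σ α G g) :=
  (hs.comp (contDiff_fst.comp contDiff_snd)).mul (contDiff_balance hα hG hg hmn)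

lemma pt_relaxation (t x μ : ℝ) :
    pt (relaxation σ α G g) t x μ = 1 / σ x * pt (balance α G g) t x μ :=
  deriv_const_mul_field _

lemma opB_eq (t x μ : ℝ) :
    opB σ α G g t x μ = 1 / σ x ^ 2 * pt (balance α G g) t x μ
      - 1 / σ x * μ * px (streaming σ (relaxation σ α G g)) t x μ := rfl

lemma opA_eq (hs : ContDiff ℝ 2 fun x => 1 / σ x) (hα : ContDiff ℝ 1 α) (hG : ContDiff ℝ 1 G)
    (hg : ContDiff ℝ 3 ↿g) (t x μ : ℝ) :
    opA σ α G g t x μ = 1 / σ x * pt (streaming σ g) t x μ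
      + 1 / σ x * μ * (px (relaxation σ α G g) t x μ
        - px (streaming σ (streaming σ g)) t x μ) := by
  have hC : Differentiable ℝ ↿(relaxation σ α G g) :=
    (contDiff_relaxation (hs.of_le one_le_two) hα hG hg (by norm_num)).differentiable one_ne_zero
  have hLA : Differentiable ℝ ↿(streaming σ (streaming σ g)) :=
    (contDiff_streaming (hs.of_le one_le_two) (contDiff_streaming hs hg le_rfl)
      le_rfl).differentiable one_ne_zero
  have hsplit : (fun t x μ => 1 / σ x *
      (pt g t x μ + α x * g t x μ - G x - μ * px (streaming σ g) t x μ))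
      = fun t x μ => relaxation σ α G g t x μ - streaming σ (streaming σ g) t x μ := by
    funext t x μ
    simp only [relaxation, balance, streaming]
    ring
  rw [← px_sub hC hLA, ← hsplit]
  rfl

end LRTE

namespace SolvesLRTE

open LRTE Topology

variable {ε T xL xR : ℝ} {σ α G : ℝ → ℝ} {f : ℝ → ℝ → ℝ → ℝ} {t x μ : ℝ}

theorem expansion (hsol : SolvesLRTE ε T xL xR σ α G f) (hσ : ∀ x, σ x ≠ 0)
    (ht : t ∈ Ioo 0 T) (hx : x ∈ Ioo xL xR) (hμ : μ ∈ Icc (-1) 1) :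
    f t x μ = avg f t x - ε * streaming σ f t x μ - ε ^ 2 * relaxation σ α G f t x μ := by
  have h := hsol t ht x hx μ hμ
  have hσx := hσ x
  simp only [streaming, relaxation, balance]
  field_simp
  linear_combination h

theorem px_expansion (hsol : SolvesLRTE ε T xL xR σ α G f) (hσ : ∀ x, σ x ≠ 0)
    (hs : ContDiff ℝ 1 fun x => 1 / σ x) (hα : ContDiff ℝ 1 α) (hG : ContDiff ℝ 1 G)
    (hf : ContDiff ℝ 2 ↿f) (ht : t ∈ Ioo 0 T) (hx : x ∈ Ioo xL xR) (hμ : μ ∈ Icc (-1) 1) :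
    px f t x μ = avg (px f) t x - ε * px (streaming σ f) t x μ
      - ε ^ 2 * px (relaxation σ α G f) t x μ := by
  have hA := (contDiff_streaming hs hf le_rfl).differentiable one_ne_zero
  have hC := (contDiff_relaxation hs hα hG hf le_rfl).differentiable one_ne_zero
  have hloc : (fun y => f t y μ) =ᶠ[𝓝 x] fun y =>
      avg f t y - ε * streaming σ f t y μ - ε ^ 2 * relaxation σ α G f t y μ :=
    eventually_of_mem (Ioo_mem_nhds hx.1 hx.2) fun y hy => hsol.expansion hσ ht hy hμ
  exact ((((hasDerivAt_avg_x (hf.of_le one_le_two) t x).sub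
    ((hasDerivAt_px hA t x μ).const_mul ε)).sub
    ((hasDerivAt_px hC t x μ).const_mul (ε ^ 2))).congr_of_eventuallyEq hloc).deriv

theorem pt_expansion (hsol : SolvesLRTE ε T xL xR σ α G f) (hσ : ∀ x, σ x ≠ 0)
    (hs : ContDiff ℝ 1 fun x => 1 / σ x) (hα : ContDiff ℝ 1 α) (hG : ContDiff ℝ 1 G)
    (hf : ContDiff ℝ 2 ↿f) (ht : t ∈ Ioo 0 T) (hx : x ∈ Ioo xL xR) (hμ : μ ∈ Icc (-1) 1) :
    pt f t x μ = avg (pt f) t x - ε * pt (streaming σ f) t x μ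
      - ε ^ 2 * pt (relaxation σ α G f) t x μ := by
  have hA := (contDiff_streaming hs hf le_rfl).differentiable one_ne_zero
  have hC := (contDiff_relaxation hs hα hG hf le_rfl).differentiable one_ne_zero
  have hloc : (fun s => f s x μ) =ᶠ[𝓝 t] fun s =>
      avg f s x - ε * streaming σ f s x μ - ε ^ 2 * relaxation σ α G f s x μ :=
    eventually_of_mem (Ioo_mem_nhds ht.1 ht.2) fun s hs => hsol.expansion hσ hs hx hμ
  exact ((((hasDerivAt_avg_t (hf.of_le one_le_two) t x).sub
    ((hasDerivAt_pt hA t x μ).const_mul ε)).sub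
    ((hasDerivAt_pt hC t x μ).const_mul (ε ^ 2))).congr_of_eventuallyEq hloc).deriv

theorem px_streaming_relaxation (hsol : SolvesLRTE ε T xL xR σ α G f) (hε : ε ≠ 0)
    (hσ : ∀ x, σ x ≠ 0) (hs : ContDiff ℝ 2 fun x => 1 / σ x) (hα : ContDiff ℝ 1 α)
    (hG : ContDiff ℝ 1 G) (hf : ContDiff ℝ 3 ↿f) (ht : t ∈ Ioo 0 T) (hx : x ∈ Ioo xL xR)
    (hμ : μ ∈ Icc (-1) 1) :
    ε ^ 2 * px (streaming σ (relaxation σ α G f)) t x μ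
      = deriv (fun y => 1 / σ y * μ * avg (px f) t y) x - px (streaming σ f) t x μ
        - ε * px (streaming σ (streaming σ f)) t x μ := by
  have hs1 := hs.of_le one_le_two
  have hf2 : ContDiff ℝ 2 ↿f := hf.of_le (by norm_num)
  have hA := (contDiff_streaming hs1 hf2 le_rfl).differentiable one_ne_zero
  have hLA := (contDiff_streaming hs1 (contDiff_streaming hs hf le_rfl) le_rfl).differentiable
    one_ne_zero
  have hρx : DifferentiableAt ℝ (fun y => 1 / σ y * μ * avg (px f) t y) x :=
    (((hs.differentiable two_ne_zero) x).mul_const μ).mul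
      (hasDerivAt_avg_x (contDiff_px hf (by norm_num)) t x).differentiableAt
  -- Multiplying the `x`-derivative of the expansion by `μ / σ` expresses the streaming of the
  -- relaxation term, which is only `C¹`, through smoother quantities.
  have hloc : (fun y => streaming σ (relaxation σ α G f) t y μ) =ᶠ[𝓝 x] fun y =>
      (ε ^ 2)⁻¹ * (1 / σ y * μ * avg (px f) t y - streaming σ f t y μ
        - ε * streaming σ (streaming σ f) t y μ) := by
    filter_upwards [Ioo_mem_nhds hx.1 hx.2] with y hy
    have hσy := hσ y
    have hpx := hsol.px_expansion hσ hs1 hα hG hf2 ht hy hμ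
    simp only [streaming] at hpx ⊢
    rw [hpx]
    field_simp
    ring
  have hderiv : px (streaming σ (relaxation σ α G f)) t x μ = (ε ^ 2)⁻¹ *
      (deriv (fun y => 1 / σ y * μ * avg (px f) t y) x - px (streaming σ f) t x μ
        - ε * px (streaming σ (streaming σ f)) t x μ) :=
    ((((hρx.hasDerivAt.sub (hasDerivAt_px hA t x μ)).sub
      ((hasDerivAt_px hLA t x μ).const_mul ε)).const_mul (ε ^ 2)⁻¹).congr_of_eventuallyEq
        hloc).deriv
  rw [hderiv]
  field_simp

end SolvesLRTE

open LRTE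

theorem iterated_expansion_identity_general
    (ε T xL xR : ℝ) (σ α G : ℝ → ℝ) (f : ℝ → ℝ → ℝ → ℝ)
    (hε : 0 < ε)
    (hσ : ContDiff ℝ 2 σ) (hσpos : ∀ x, 0 < σ x)
    (hα : ContDiff ℝ 1 α) (hG : ContDiff ℝ 1 G)
    (hf : ContDiff ℝ 3 (fun p : ℝ × ℝ × ℝ => f p.1 p.2.1 p.2.2))
    (hsol : SolvesLRTE ε T xL xR σ α G f) :
    ∀ t ∈ Set.Ioo (0 : ℝ) T, ∀ x ∈ Set.Ioo xL xR, ∀ μ ∈ Set.Icc (-1 : ℝ) 1,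
      f t x μ = avg f t x
        - (ε / σ x) * μ * deriv (fun y => avg f t y) x
        - (ε ^ 2 / σ x) *
            (deriv (fun s => avg f s x) t
              - μ * deriv (fun y => (1 / σ y) * μ * deriv (fun y' => avg f t y') y) x
              + α x * f t x μ - G x)
        + ε ^ 3 * opA σ α G f t x μ + ε ^ 4 * opB σ α G f t x μ := by
  intro t ht x hx μ hμ
  have hσ0 : ∀ x, σ x ≠ 0 := fun x => (hσpos x).ne'
  have hs : ContDiff ℝ 2 fun x => 1 / σ x := contDiff_const.div hσ hσ0
  have hf1 : ContDiff ℝ 1 ↿f := hf.of_le (by norm_num)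
  have hf2 : ContDiff ℝ 2 ↿f := hf.of_le (by norm_num)
  have e0 := hsol.expansion hσ0 ht hx hμ
  have ex := hsol.px_expansion hσ0 (hs.of_le one_le_two) hα hG hf2 ht hx hμ
  have et := hsol.pt_expansion hσ0 (hs.of_le one_le_two) hα hG hf2 ht hx hμ
  have exx := hsol.px_streaming_relaxation hε.ne' hσ0 hs hα hG hf ht hx hμ
  simp only [streaming, relaxation, balance] at e0
  rw [pt_relaxation] at et
  rw [opA_eq hs hα hG hf, opB_eq]
  simp only [fun y => (hasDerivAt_avg_x hf1 t y).deriv, (hasDerivAt_avg_t hf1 t x).deriv]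
  linear_combination e0 - ε * (1 / σ x) * μ * ex - ε ^ 2 * (1 / σ x) * et
    + ε ^ 2 * (1 / σ x) * μ * exx

/-- If `f` is three times continuously differentiable and satisfies the scaled 1D LRTE on
`τ × D × [-1,1]`, then the iterated expansion identity holds there:
`f = ρ − (ε/σ) μ ∂_x ρ − (ε²/σ)( ∂_t ρ − μ ∂_x((1/σ) μ ∂_x ρ) + α f − G ) + ε³ 𝒜(f) + ε⁴ ℬ(f)`. -/
theorem iterated_expansion_identity
    (ε T xL xR : ℝ) (σ α G : ℝ → ℝ) (f : ℝ → ℝ → ℝ → ℝ)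
    (hε : 0 < ε) (hT : 0 < T) (hD : xL < xR)
    (hσ : ContDiff ℝ 2 σ) (hσpos : ∀ x, 0 < σ x)
    (hα : ContDiff ℝ 1 α) (hG : ContDiff ℝ 1 G)
    (hf : ContDiff ℝ 3 (fun p : ℝ × ℝ × ℝ => f p.1 p.2.1 p.2.2))
    (hsol : SolvesLRTE ε T xL xR σ α G f) :
    ∀ t ∈ Set.Ioo (0 : ℝ) T, ∀ x ∈ Set.Ioo xL xR, ∀ μ ∈ Set.Icc (-1 : ℝ) 1,
      f t x μ = avg f t x
        - (ε / σ x) * μ * deriv (fun y => avg f t y) x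
        - (ε ^ 2 / σ x) *
            (deriv (fun s => avg f s x) t
              - μ * deriv (fun y => (1 / σ y) * μ * deriv (fun y' => avg f t y') y) x
              + α x * f t x μ - G x)
        + ε ^ 3 * opA σ α G f t x μ + ε ^ 4 * opB σ α G f t x μ :=
  iterated_expansion_identity_general ε T xL xR σ α G f hε hσ hσpos hα hG hf hsol
end

section
/- Let f be a fixed continuously differentiable function on [0,T] × [x_L, x_R] × [-1,1] with bounded first partial derivatives, let σ, α, G be continuous on [x_L, x_R], and let ρ = ⟨f⟩. Then the PINN governing residual loss L^ε := ∫_0^T ∫_{x_L}^{x_R} ∫_{-1}^{1} | ε² ∂_t f + ε μ ∂_x f − σ(x)(ρ − f) + ε² α(x) f − ε² G(x) |² dμ dx dt converges, as ε → 0⁺, to ∫_0^T ∫_{x_L}^{x_R} ∫_{-1}^{1} σ(x)² | ρ − f |² dμ dx dt, i.e. to the residual of the equation σ(ρ − f) = 0 rather than of the diffusion limit equation. -/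
open MeasureTheory Real intervalIntegral

open Filter

open Set

/-! Extending `σ, α, G` continuously from `[x_L, x_R]` to `ℝ` does not change the loss, which then
becomes a triple integral over a bounded box of a function jointly continuous in `(ε, t, x, μ)`:
the partial derivatives of `f` are continuous since `f` is `C¹`. So the loss is continuous in `ε`,
and its limit as `ε → 0⁺` is its value at `ε = 0`, where only the term `σ (ρ - f)` survives. -/

theorem ContinuousOn.exists_continuous_eqOn_Icc {α β : Type*} [LinearOrder α] [TopologicalSpace α]
    [OrderTopology α] [TopologicalSpace β] {f : α → β} {a b : α} (hab : a ≤ b)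
    (hf : ContinuousOn f (Icc a b)) : ∃ g : α → β, Continuous g ∧ EqOn g f (Icc a b) :=
  ⟨IccExtend hab ((Icc a b).domRestrict f), continuous_IccExtend_iff.2 hf.domRestrict,
    fun _ hx => IccExtend_of_mem hab _ hx⟩

theorem intervalIntegral.integral_integral_integral_congr {F G : ℝ → ℝ → ℝ → ℝ}
    {a b c d e g : ℝ} (h : ∀ t, ∀ x ∈ uIcc c d, ∀ μ, F t x μ = G t x μ) :
    ∫ t in a..b, ∫ x in c..d, ∫ μ in e..g, F t x μ =
      ∫ t in a..b, ∫ x in c..d, ∫ μ in e..g, G t x μ :=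
  integral_congr fun t _ => integral_congr fun x hx => integral_congr fun μ _ => h t x hx μ

theorem continuous_parametric_tripleIntervalIntegral {X : Type*} [TopologicalSpace X]
    {F : X → ℝ → ℝ → ℝ → ℝ}
    (hF : Continuous fun q : X × ℝ × ℝ × ℝ => F q.1 q.2.1 q.2.2.1 q.2.2.2) (a b c d e g : ℝ) :
    Continuous fun p => ∫ t in a..b, ∫ x in c..d, ∫ μ in e..g, F p t x μ := by
  fun_prop

theorem pt_eq_fderiv {f : ℝ → ℝ → ℝ → ℝ}
    (hf : Differentiable ℝ fun p : ℝ × ℝ × ℝ => f p.1 p.2.1 p.2.2) (t x μ : ℝ) :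
    pt f t x μ = fderiv ℝ (fun p : ℝ × ℝ × ℝ => f p.1 p.2.1 p.2.2) (t, x, μ) (1, 0, 0) :=
  ((hf _).hasFDerivAt.comp_hasDerivAt t
    ((hasDerivAt_id t).prodMk ((hasDerivAt_const t x).prodMk (hasDerivAt_const t μ)))).deriv

theorem px_eq_fderiv {f : ℝ → ℝ → ℝ → ℝ}
    (hf : Differentiable ℝ fun p : ℝ × ℝ × ℝ => f p.1 p.2.1 p.2.2) (t x μ : ℝ) :
    px f t x μ = fderiv ℝ (fun p : ℝ × ℝ × ℝ => f p.1 p.2.1 p.2.2) (t, x, μ) (0, 1, 0) :=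
  ((hf _).hasFDerivAt.comp_hasDerivAt x
    ((hasDerivAt_const x t).prodMk ((hasDerivAt_id x).prodMk (hasDerivAt_const x μ)))).deriv

theorem continuous_pt {f : ℝ → ℝ → ℝ → ℝ}
    (hf : ContDiff ℝ 1 fun p : ℝ × ℝ × ℝ => f p.1 p.2.1 p.2.2) :
    Continuous fun p : ℝ × ℝ × ℝ => pt f p.1 p.2.1 p.2.2 := by
  simp only [pt_eq_fderiv (hf.differentiable one_ne_zero)]
  exact (hf.continuous_fderiv one_ne_zero).clm_apply continuous_const

theorem continuous_px {f : ℝ → ℝ → ℝ → ℝ}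
    (hf : ContDiff ℝ 1 fun p : ℝ × ℝ × ℝ => f p.1 p.2.1 p.2.2) :
    Continuous fun p : ℝ × ℝ × ℝ => px f p.1 p.2.1 p.2.2 := by
  simp only [px_eq_fderiv (hf.differentiable one_ne_zero)]
  exact (hf.continuous_fderiv one_ne_zero).clm_apply continuous_const

theorem continuous_avg {f : ℝ → ℝ → ℝ → ℝ}
    (hf : Continuous fun p : ℝ × ℝ × ℝ => f p.1 p.2.1 p.2.2) :
    Continuous fun p : ℝ × ℝ => avg f p.1 p.2 := by
  unfold avg
  fun_prop

theorem PINN_loss_tendsto_wrong_limit_general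
    (T xL xR : ℝ) (σ α G : ℝ → ℝ) (f : ℝ → ℝ → ℝ → ℝ)
    (hD : xL < xR)
    (hf : ContDiff ℝ 1 (fun p : ℝ × ℝ × ℝ => f p.1 p.2.1 p.2.2))
    (hσ : ContinuousOn σ (Set.Icc xL xR)) (hα : ContinuousOn α (Set.Icc xL xR))
    (hG : ContinuousOn G (Set.Icc xL xR)) :
    Tendsto
      (fun ε : ℝ =>
        ∫ t in (0 : ℝ)..T, ∫ x in xL..xR, ∫ μ in (-1 : ℝ)..1,
          |ε ^ 2 * pt f t x μ + ε * μ * px f t x μ - σ x * (avg f t x - f t x μ)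
            + ε ^ 2 * α x * f t x μ - ε ^ 2 * G x| ^ 2)
      (nhdsWithin 0 (Set.Ioi 0))
      (nhds (∫ t in (0 : ℝ)..T, ∫ x in xL..xR, ∫ μ in (-1 : ℝ)..1,
          (σ x) ^ 2 * |avg f t x - f t x μ| ^ 2)) := by
  obtain ⟨σ', hσ'c, hσ'⟩ := hσ.exists_continuous_eqOn_Icc hD.le
  obtain ⟨α', hα'c, hα'⟩ := hα.exists_continuous_eqOn_Icc hD.le
  obtain ⟨G', hG'c, hG'⟩ := hG.exists_continuous_eqOn_Icc hD.le
  have hpt := continuous_pt hf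
  have hpx := continuous_px hf
  have havg := continuous_avg hf.continuous
  have hf₀ := hf.continuous
  have hL := continuous_parametric_tripleIntervalIntegral (X := ℝ)
    (F := fun ε t x μ => |ε ^ 2 * pt f t x μ + ε * μ * px f t x μ - σ' x * (avg f t x - f t x μ)
      + ε ^ 2 * α' x * f t x μ - ε ^ 2 * G' x| ^ 2) (by fun_prop) 0 T xL xR (-1) 1
  convert (hL.tendsto 0).mono_left nhdsWithin_le_nhds using 2
  · refine intervalIntegral.integral_integral_integral_congr fun t x hx μ => ?_
    rw [uIcc_of_le hD.le] at hx
    rw [hσ' hx, hα' hx, hG' hx]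
  · refine intervalIntegral.integral_integral_integral_congr fun t x hx μ => ?_
    rw [uIcc_of_le hD.le] at hx
    simp [hσ' hx, abs_mul, mul_pow]

/-- The vanilla PINN governing residual loss for the scaled 1D LRTE, for a fixed
continuously differentiable `f` with bounded first partial derivatives and `σ, α, G`
continuous on `[x_L,x_R]`, converges as `ε → 0⁺` to
`∫∫∫ σ² |ρ − f|²`, the residual of the equation `σ(ρ − f) = 0` (and not of the
diffusion limit equation). -/
theorem PINN_loss_tendsto_wrong_limit
    (T xL xR : ℝ) (σ α G : ℝ → ℝ) (f : ℝ → ℝ → ℝ → ℝ)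
    (hT : 0 < T) (hD : xL < xR)
    (hf : ContDiff ℝ 1 (fun p : ℝ × ℝ × ℝ => f p.1 p.2.1 p.2.2))
    (hbd : ∃ C : ℝ, ∀ p : ℝ × ℝ × ℝ,
      ‖fderiv ℝ (fun q : ℝ × ℝ × ℝ => f q.1 q.2.1 q.2.2) p‖ ≤ C)
    (hσ : ContinuousOn σ (Set.Icc xL xR)) (hα : ContinuousOn α (Set.Icc xL xR))
    (hG : ContinuousOn G (Set.Icc xL xR)) :
    Tendsto
      (fun ε : ℝ =>
        ∫ t in (0 : ℝ)..T, ∫ x in xL..xR, ∫ μ in (-1 : ℝ)..1,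
          |ε ^ 2 * pt f t x μ + ε * μ * px f t x μ - σ x * (avg f t x - f t x μ)
            + ε ^ 2 * α x * f t x μ - ε ^ 2 * G x| ^ 2)
      (nhdsWithin 0 (Set.Ioi 0))
      (nhds (∫ t in (0 : ℝ)..T, ∫ x in xL..xR, ∫ μ in (-1 : ℝ)..1,
          (σ x) ^ 2 * |avg f t x - f t x μ| ^ 2)) :=
  PINN_loss_tendsto_wrong_limit_general T xL xR σ α G f hD hf hσ hα hG
end
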